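/- arXiv:1805.03574 — 7 statements merged into one kernel-verified Lean document; each statement's English description precedes it below -/
import Mathlib

section
/- Let R = {R_1,...,R_m} be strings of length n, k ∈ [1,n], and let a_k, d_k be the positional Burrows–Wheeler transform arrays at column k. Then for j ∈ [1,k-1], one has |R[j,k]| ≠ |R[j+1,k]| if and only if j = d_k[i] - 1 for some i ∈ [1,m]. -/
/-- The number of distinct substrings `R_i[j..k]` among the strings `R_1, …, R_m`. -/
def segCard {α : Type*} [DecidableEq α] {m : ℕ} (R : Fin m → ℕ → α) (j k : ℕ) : ℕ :=
  (Finset.univ.image (fun i : Fin m => fun x : Fin (k + 1 - j) => R i (j + x))).card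

/-- The reversed prefix `R_i[k] R_i[k-1] ⋯ R_i[1]` as a list. -/
def revPrefix {α : Type*} {m : ℕ} (R : Fin m → ℕ → α) (i : Fin m) (k : ℕ) : List α :=
  (List.range k).map (fun x => R i (k - x))

/-- `a` is a pBWT ordering permutation at column `k`: it sorts the reversed
prefixes lexicographically. -/
def SortsRevPrefixes {α : Type*} [LinearOrder α] {m : ℕ} (R : Fin m → ℕ → α)
    (a : Equiv.Perm (Fin m)) (k : ℕ) : Prop :=
  ∀ i j : Fin m, i ≤ j → revPrefix R (a i) k ≤ revPrefix R (a j) k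

/-- `d` is the pBWT divergence array at column `k` for the ordering `a`:
`d i` is the starting position of the longest common suffix of
`R_{a i}[1..k]` and `R_{a (i-1)}[1..k]`, with `d i = k + 1` when this suffix
is empty or `i` is the first index. -/
def IsDArray {α : Type*} {m : ℕ} (R : Fin m → ℕ → α) (a : Equiv.Perm (Fin m))
    (k : ℕ) (d : Fin m → ℕ) : Prop :=
  ∀ i : Fin m,
    (((i : ℕ) = 0) → d i = k + 1) ∧
    (((i : ℕ) ≠ 0) →
      1 ≤ d i ∧ d i ≤ k + 1 ∧
      (∀ x, d i ≤ x → x ≤ k →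
        R (a i) x = R (a ⟨(i : ℕ) - 1, lt_of_le_of_lt (Nat.sub_le _ _) i.isLt⟩) x) ∧
      (1 < d i →
        R (a i) (d i - 1) ≠ R (a ⟨(i : ℕ) - 1, lt_of_le_of_lt (Nat.sub_le _ _) i.isLt⟩) (d i - 1)))

/-! Dropping the first letter maps the distinct factors `R_i[j..k]` onto the distinct factors
`R_i[j+1..k]`, so the two counts differ exactly when two rows agree on `[j+1..k]` but differ at `j`.
The rows are sorted by reversed prefix, so the rows agreeing with a given one on `[j+1..k]` form a
contiguous block of `a`; hence such a pair can be taken adjacent in `a`, and for adjacent rows the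
condition says exactly that the divergence value is `j + 1`. -/

open Set

theorem List.take_le_take_of_le {α : Type*} [LinearOrder α] {l₁ l₂ : List α} (h : l₁ ≤ l₂)
    (r : ℕ) : l₁.take r ≤ l₂.take r := by
  rcases h.lt_or_eq with hlt | rfl
  · change List.Lex (· < ·) l₁ l₂ at hlt
    clear h
    induction hlt generalizing r with
    | nil =>
      rw [List.take_nil]
      cases (List.take r _) with
      | nil => exact le_rfl
      | cons => exact le_of_lt List.Lex.nil
    | cons _ ih =>
      cases r with
      | zero => exact le_rfl
      | succ r => exact List.cons_le_cons _ (ih r)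
    | rel hab =>
      cases r with
      | zero => exact le_rfl
      | succ r => exact le_of_lt (List.Lex.rel hab)
  · exact le_rfl

theorem Finset.card_image_ne_card_image_iff {ι β γ : Type*} [DecidableEq β] [DecidableEq γ]
    (s : Finset ι) {f : ι → β} {g : ι → γ} (φ : β → γ) (hg : ∀ i, g i = φ (f i)) :
    (s.image f).card ≠ (s.image g).card ↔ ∃ i ∈ s, ∃ i' ∈ s, g i = g i' ∧ f i ≠ f i' := by
  have himage : s.image g = (s.image f).image φ := by
    rw [Finset.image_image]
    exact Finset.image_congr fun i _ => hg i
  rw [himage, ne_comm, Ne, Finset.card_image_iff]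
  simp [Set.InjOn, hg]

theorem Fin.exists_adjacent_ne_of_ne {β : Type*} {m : ℕ} (g : Fin m → β) {p q : Fin m}
    (hpq : p ≤ q) (hne : g p ≠ g q) :
    ∃ s t : Fin m, (s : ℕ) + 1 = t ∧ p ≤ s ∧ t ≤ q ∧ g s ≠ g t := by
  by_contra! hconst
  have hgp : ∀ n, ∀ t : Fin m, (t : ℕ) = p + n → t ≤ q → g p = g t := by
    intro n
    induction n with
    | zero => intro t ht _; rw [show t = p from Fin.ext (by simpa using ht)]
    | succ n ih =>
      intro t ht htq
      let s : Fin m := ⟨p + n, by omega⟩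
      have hsq : s ≤ q := by rw [Fin.le_def] at htq ⊢; dsimp [s]; omega
      rw [ih s rfl hsq]
      exact hconst s t (by dsimp [s]; omega) (by rw [Fin.le_def]; dsimp [s]; omega) htq
  exact hne (hgp (q - p) q (by simp only [Fin.le_def] at hpq; omega) le_rfl)

section Windows

variable {α : Type*} {m : ℕ} (R : Fin m → ℕ → α)

/-- The factor `R_i[j..k]`, as counted by `segCard`. -/
def window (j k : ℕ) (i : Fin m) : Fin (k + 1 - j) → α := fun x => R i (j + x)

theorem window_eq_window_iff {j k : ℕ} {i i' : Fin m} :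
    window R j k i = window R j k i' ↔ EqOn (R i) (R i') (Icc j k) := by
  constructor
  · rintro h x ⟨hjx, hxk⟩
    have := congrFun h ⟨x - j, by omega⟩
    simpa [window, Nat.add_sub_cancel' hjx] using this
  · intro h
    funext x
    exact h ⟨by omega, by have := x.isLt; omega⟩

theorem window_add_one (j k : ℕ) (i : Fin m) :
    window R (j + 1) k i =
      fun y : Fin (k + 1 - (j + 1)) => window R j k i ⟨y + 1, by have := y.isLt; omega⟩ := by
  funext y
  simp only [window]
  congr 1
  omega

theorem segCard_ne_segCard_add_one_iff [DecidableEq α] {j k : ℕ} (hjk : j ≤ k) :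
    segCard R j k ≠ segCard R (j + 1) k ↔
      ∃ i i', EqOn (R i) (R i') (Icc (j + 1) k) ∧ R i j ≠ R i' j := by
  change (Finset.univ.image (window R j k)).card ≠
    (Finset.univ.image (window R (j + 1) k)).card ↔ _
  rw [Finset.card_image_ne_card_image_iff _
    (fun (w : Fin (k + 1 - j) → α) (y : Fin (k + 1 - (j + 1))) => w ⟨y + 1, by omega⟩)
    (window_add_one R j k)]
  simp only [Finset.mem_univ, true_and, window_eq_window_iff]
  refine exists₂_congr fun i i' => and_congr_right fun hEq => not_congr ?_
  rw [window_eq_window_iff, ← insert_Icc_add_one_left_eq_Icc hjk]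
  exact ⟨fun h => h (mem_insert j _), fun h => forall_mem_insert.mpr ⟨h, hEq⟩⟩

end Windows

section PBWT

variable {α : Type*} {m : ℕ}

theorem revPrefix_take_eq_iff (R : Fin m → ℕ → α) (i i' : Fin m) (j k : ℕ) :
    (revPrefix R i k).take (k - j) = (revPrefix R i' k).take (k - j) ↔
      EqOn (R i) (R i') (Icc (j + 1) k) := by
  rw [revPrefix, revPrefix, ← List.map_take, ← List.map_take, List.take_range,
    min_eq_left (Nat.sub_le k j), List.map_eq_map_iff]
  constructor
  · rintro h x ⟨hjx, hxk⟩
    simpa [Nat.sub_sub_self hxk] using h (k - x) (List.mem_range.mpr (by omega))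
  · intro h y hy
    rw [List.mem_range] at hy
    exact h ⟨by omega, by omega⟩

variable {R : Fin m → ℕ → α} {a : Equiv.Perm (Fin m)} {k : ℕ} {d : Fin m → ℕ} {j : ℕ}

theorem SortsRevPrefixes.eqOn_of_le_of_le [LinearOrder α] (ha : SortsRevPrefixes R a k)
    {p t q : Fin m} (hpt : p ≤ t) (htq : t ≤ q)
    (hpq : EqOn (R (a p)) (R (a q)) (Icc (j + 1) k)) :
    EqOn (R (a t)) (R (a p)) (Icc (j + 1) k) := by
  rw [← revPrefix_take_eq_iff] at hpq ⊢
  have hle := List.take_le_take_of_le (ha t q htq) (k - j)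
  rw [← hpq] at hle
  exact le_antisymm hle (List.take_le_take_of_le (ha p t hpt) (k - j))

theorem IsDArray.eq_add_one_iff (hd : IsDArray R a k d) {i : Fin m} (hi : (i : ℕ) ≠ 0)
    (hj : 1 ≤ j) (hjk : j ≤ k) :
    d i = j + 1 ↔ EqOn (R (a i)) (R (a ⟨i - 1, by omega⟩)) (Icc (j + 1) k) ∧
      R (a i) j ≠ R (a ⟨i - 1, by omega⟩) j := by
  obtain ⟨-, hdk, hagree, hdiff⟩ := (hd i).2 hi
  constructor
  · intro hdi
    refine ⟨fun x hx => hagree x (hdi ▸ hx.1) hx.2, ?_⟩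
    simpa [hdi] using hdiff (by omega)
  · rintro ⟨hEq, hne⟩
    have hgt : ¬ d i ≤ j := fun hle => hne (hagree j hle hjk)
    have hlt : ¬ j + 1 < d i := fun hlt => hdiff (by omega) (hEq ⟨by omega, by omega⟩)
    omega

theorem exists_eq_add_one_of_eqOn_of_ne [LinearOrder α] (ha : SortsRevPrefixes R a k)
    (hd : IsDArray R a k d) (hj : 1 ≤ j) (hjk : j ≤ k) {i i' : Fin m}
    (hEq : EqOn (R i) (R i') (Icc (j + 1) k)) (hne : R i j ≠ R i' j) :
    ∃ t, d t = j + 1 := by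
  obtain ⟨p, rfl⟩ := a.surjective i
  obtain ⟨q, rfl⟩ := a.surjective i'
  wlog hpq : p < q generalizing p q
  · rcases (not_lt.mp hpq).lt_or_eq with hqp | rfl
    · exact this q p hEq.symm hne.symm hqp
    · exact absurd rfl hne
  obtain ⟨s, t, hst, hps, htq, hst_ne⟩ :=
    Fin.exists_adjacent_ne_of_ne (fun t => R (a t) j) hpq.le hne
  have ht : (t : ℕ) ≠ 0 := by omega
  obtain rfl : s = ⟨t - 1, (Nat.sub_le _ _).trans_lt t.isLt⟩ := Fin.ext (by simp only; omega)
  have hsq : (⟨t - 1, by omega⟩ : Fin m) ≤ q := by rw [Fin.le_def] at htq ⊢; omega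
  have hpt : p ≤ t := by rw [Fin.le_def] at hps ⊢; simp only at hps; omega
  refine ⟨t, (hd.eq_add_one_iff ht hj hjk).mpr ⟨?_, fun h => hst_ne h.symm⟩⟩
  exact (ha.eqOn_of_le_of_le hpt htq hEq).trans (ha.eqOn_of_le_of_le hps hsq hEq).symm

end PBWT

theorem stmt3_general {α : Type*} [LinearOrder α] (m : ℕ) (R : Fin m → ℕ → α)
    (k : ℕ)
    (a : Equiv.Perm (Fin m)) (d : Fin m → ℕ)
    (ha : SortsRevPrefixes R a k) (hd : IsDArray R a k d)
    (j : ℕ) (hj1 : 1 ≤ j) (hj2 : j ≤ k - 1) :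
    segCard R j k ≠ segCard R (j + 1) k ↔ ∃ i : Fin m, j = d i - 1 := by
  have hjk : j ≤ k := by omega
  rw [segCard_ne_segCard_add_one_iff R hjk]
  constructor
  · rintro ⟨i, i', hEq, hne⟩
    obtain ⟨t, ht⟩ := exists_eq_add_one_of_eqOn_of_ne ha hd hj1 hjk hEq hne
    exact ⟨t, by omega⟩
  · rintro ⟨t, hjt⟩
    have ht : (t : ℕ) ≠ 0 := fun h => by have := (hd t).1 h; omega
    have hdt : 1 ≤ d t := ((hd t).2 ht).1
    exact ⟨_, _, (hd.eq_add_one_iff ht hj1 hjk).mp (by omega)⟩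

theorem stmt3 {α : Type*} [LinearOrder α] (m n : ℕ) (R : Fin m → ℕ → α)
    (k : ℕ) (hk1 : 1 ≤ k) (hk2 : k ≤ n)
    (a : Equiv.Perm (Fin m)) (d : Fin m → ℕ)
    (ha : SortsRevPrefixes R a k) (hd : IsDArray R a k d)
    (j : ℕ) (hj1 : 1 ≤ j) (hj2 : j ≤ k - 1) :
    segCard R j k ≠ segCard R (j + 1) k ↔ ∃ i : Fin m, j = d i - 1 :=
  stmt3_general m R k a d ha hd j hj1 hj2
end

section
/- With pBWT arrays a_k, d_k at column k, let s_k[1..r] be the sorted list of distinct values in d_k and t_k[j] the multiplicity of s_k[j] in d_k. Then for every j ∈ [1,r], |R[s_k[j]-1, k]| = t_k[j] + t_k[j+1] + ... + t_k[r]. -/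
/-!
Put `p = s_j - 1`. Because the rows are sorted by reversed prefix, the rows sharing a
segment `R_i[p..k]` are consecutive, and row `i > 0` shares its segment with row `i - 1`
exactly when `d_k[i] ≤ p`. So every segment is counted once by the first row of its block,
i.e. by the row `0` or a row with `d_k[i] ≥ s_j`; grouping those rows by their value of
`d_k` gives the sum.
-/

open Finset

theorem List.take_le_take_of_lt {α : Type*} [LinearOrder α] {l l' : List α} (h : l < l')
    (t : ℕ) : l.take t ≤ l'.take t := by
  induction h generalizing t with
  | @nil b l =>
    rw [List.take_nil]
    obtain h | h := List.lex_nil_or_eq_nil (r := ((· < ·) : α → α → Prop)) ((b :: l).take t)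
    · exact le_of_lt h
    · rw [h]
  | cons _ ih => cases t <;> simp [List.cons_le_cons _ (ih _)]
  | @rel a l b l' hab =>
    cases t with
    | zero => exact le_rfl
    | succ t => exact le_of_lt (List.Lex.rel hab : a :: l.take t < b :: l'.take t)

theorem List.take_le_take_of_le_s4 {α : Type*} [LinearOrder α] {l l' : List α} (h : l ≤ l')
    (t : ℕ) : l.take t ≤ l'.take t := by
  obtain h | rfl := h.lt_or_eq
  · exact List.take_le_take_of_lt h t
  · exact le_rfl

theorem List.take_eq_take_of_le_of_le {α : Type*} [LinearOrder α] {l₁ l₂ l₃ : List α}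
    (h₁₂ : l₁ ≤ l₂) (h₂₃ : l₂ ≤ l₃) {t : ℕ} (h : l₁.take t = l₃.take t) :
    l₂.take t = l₁.take t :=
  le_antisymm (h ▸ List.take_le_take_of_le_s4 h₂₃ t) (List.take_le_take_of_le_s4 h₁₂ t)

/-- The index `⟨i - 1, _⟩` of `IsDArray`; it is `0` at `i = 0`. -/
def prevRow {m : ℕ} (i : Fin m) : Fin m :=
  ⟨(i : ℕ) - 1, lt_of_le_of_lt (Nat.sub_le _ _) i.isLt⟩

theorem prevRow_le {m : ℕ} (i : Fin m) : prevRow i ≤ i :=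
  Fin.le_def.2 (Nat.sub_le _ _)

theorem le_prevRow_of_lt {m : ℕ} {i₁ i₂ : Fin m} (h : i₁ < i₂) : i₁ ≤ prevRow i₂ :=
  Fin.le_def.2 (Nat.le_sub_one_of_lt h)

theorem prevRow_lt {m : ℕ} {i : Fin m} (h : (i : ℕ) ≠ 0) : prevRow i < i :=
  Fin.lt_def.2 (Nat.sub_one_lt h)

/-- Each value of `f` is first taken at a block start, and interval fibres make that block start
unique. -/
theorem card_image_eq_card_filter_blockStart {β : Type*} [DecidableEq β] {m : ℕ}
    (f : Fin m → β) (hf : ∀ b, (f ⁻¹' {b}).OrdConnected) :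
    #(univ.image f) = #(univ.filter fun i : Fin m => (i : ℕ) = 0 ∨ f i ≠ f (prevRow i)) := by
  have not_start {i₁ i₂ : Fin m} (hlt : i₁ < i₂) (heq : f i₁ = f i₂) :
      ¬((i₂ : ℕ) = 0 ∨ f i₂ ≠ f (prevRow i₂)) := by
    rw [not_or, not_not]
    exact ⟨Nat.ne_zero_of_lt (Fin.lt_def.1 hlt),
      ((hf _).out heq rfl ⟨le_prevRow_of_lt hlt, prevRow_le _⟩).symm⟩
  symm
  refine card_nbij f (fun i _ => mem_image_of_mem f (mem_univ i)) ?_ ?_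
  · intro i₁ h₁ i₂ h₂ heq
    simp only [mem_coe, mem_filter, mem_univ, true_and] at h₁ h₂
    rcases lt_trichotomy i₁ i₂ with hlt | rfl | hlt
    · exact absurd h₂ (not_start hlt heq)
    · rfl
    · exact absurd h₁ (not_start hlt heq.symm)
  · rintro b hb
    obtain ⟨i, -, rfl⟩ := mem_image.1 hb
    set i₀ := (univ.filter (f · = f i)).min' ⟨i, by simp⟩
    have hi₀ : f i₀ = f i := (mem_filter.1 (min'_mem (univ.filter (f · = f i)) _)).2
    refine ⟨i₀, ?_, hi₀⟩
    simp only [mem_coe, mem_filter, mem_univ, true_and]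
    by_contra! h
    have := min'_le (univ.filter (f · = f i)) (prevRow i₀) (by simp [← h.2, hi₀])
    exact (prevRow_lt h.1).not_ge this

section Segments

variable {α : Type*} {m : ℕ} (R : Fin m → ℕ → α)

/-- The segment `R_i[p..k]`; `segCard R p k` counts the distinct ones. -/
def rowSegment (p k : ℕ) (i : Fin m) : Fin (k + 1 - p) → α :=
  fun x => R i (p + x)

variable {R}

theorem rowSegment_eq_rowSegment_iff {p k : ℕ} {i i' : Fin m} :
    rowSegment R p k i = rowSegment R p k i' ↔ ∀ y, p ≤ y → y ≤ k → R i y = R i' y := by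
  refine ⟨fun h y hpy hyk => ?_, fun h => funext fun x => h _ (Nat.le_add_right _ _) (by omega)⟩
  simpa [rowSegment, Nat.add_sub_cancel' hpy] using congrFun h ⟨y - p, by omega⟩

/-- The segment `R_i[p..k]` is read backwards at the front of the reversed prefix. -/
theorem take_revPrefix_eq_take_revPrefix_iff {p k : ℕ} (hp : 1 ≤ p) {i i' : Fin m} :
    (revPrefix R i k).take (k + 1 - p) = (revPrefix R i' k).take (k + 1 - p) ↔
      rowSegment R p k i = rowSegment R p k i' := by
  rw [rowSegment_eq_rowSegment_iff, revPrefix, revPrefix, ← List.map_take, ← List.map_take,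
    List.take_range, List.map_eq_map_iff]
  simp only [List.mem_range, lt_min_iff]
  refine ⟨fun h y hpy hyk => ?_, fun h x hx => h _ (by omega) (by omega)⟩
  simpa [Nat.sub_sub_self hyk] using h (k - y) ⟨by omega, by omega⟩

theorem SortsRevPrefixes.ordConnected_rowSegment_preimage [LinearOrder α]
    {a : Equiv.Perm (Fin m)} {k : ℕ} (ha : SortsRevPrefixes R a k) {p : ℕ} (hp : 1 ≤ p)
    (v : Fin (k + 1 - p) → α) :
    ((fun i => rowSegment R p k (a i)) ⁻¹' {v}).OrdConnected := by
  refine ⟨fun i₁ h₁ i₃ h₃ i₂ ⟨h₁₂, h₂₃⟩ => ?_⟩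
  have h₁₃ : rowSegment R p k (a i₁) = rowSegment R p k (a i₃) := h₁.trans h₃.symm
  rw [← take_revPrefix_eq_take_revPrefix_iff hp] at h₁₃
  have h₂₁ := List.take_eq_take_of_le_of_le (ha _ _ h₁₂) (ha _ _ h₂₃) h₁₃
  rw [take_revPrefix_eq_take_revPrefix_iff hp] at h₂₁
  exact h₂₁.trans h₁

end Segments

namespace IsDArray

variable {α : Type*} {m : ℕ} {R : Fin m → ℕ → α} {a : Equiv.Perm (Fin m)} {k : ℕ}
  {d : Fin m → ℕ}

theorem le_succ (hd : IsDArray R a k d) (i : Fin m) : d i ≤ k + 1 := by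
  by_cases hi : (i : ℕ) = 0
  · exact ((hd i).1 hi).le
  · exact ((hd i).2 hi).2.1

theorem rowSegment_eq_prevRow_iff (hd : IsDArray R a k d) {p : ℕ} (hp : 1 ≤ p) {i : Fin m}
    (hi : (i : ℕ) ≠ 0) :
    rowSegment R p k (a i) = rowSegment R p k (a (prevRow i)) ↔ d i ≤ p := by
  obtain ⟨-, hdk, hagree, hdiffer⟩ := (hd i).2 hi
  rw [rowSegment_eq_rowSegment_iff]
  refine ⟨fun h => ?_, fun hdp y hpy hyk => hagree y (hdp.trans hpy) hyk⟩
  by_contra! hpd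
  exact hdiffer (by omega) (h _ (by omega) (by omega))

theorem segCard_eq_card_filter_lt [LinearOrder α] (ha : SortsRevPrefixes R a k)
    (hd : IsDArray R a k d) {p : ℕ} (hp : 1 ≤ p) (hpk : p ≤ k) :
    segCard R p k = #{i | p < d i} := by
  have himage : univ.image (rowSegment R p k) = univ.image (fun i => rowSegment R p k (a i)) := by
    conv_lhs => rw [← image_univ_equiv a, image_image]
    rfl
  rw [show segCard R p k = #(univ.image (rowSegment R p k)) from rfl, himage,
    card_image_eq_card_filter_blockStart _ (ha.ordConnected_rowSegment_preimage hp)]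
  congr 1
  refine filter_congr fun i _ => ?_
  by_cases hi : (i : ℕ) = 0
  · simpa [hi, (hd i).1 hi] using Nat.lt_succ_of_le hpk
  · simp [hi, hd.rowSegment_eq_prevRow_iff hp hi]

end IsDArray

theorem card_filter_le_eq_sum_card_fiber {ι κ β : Type*} [Fintype ι] [Fintype κ]
    [LinearOrder κ] [LinearOrder β] (d : ι → β) (s : κ → β) (hs : StrictMono s)
    (hd : ∀ i, ∃ j, d i = s j) (j : κ) :
    #{i | s j ≤ d i} = ∑ j' ∈ univ.filter (j ≤ ·), #{i | d i = s j'} := by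
  classical
  rw [← card_biUnion fun j₁ _ j₂ _ hne =>
    disjoint_filter.2 fun i _ h₁ h₂ => hne (hs.injective (h₁.symm.trans h₂))]
  congr 1
  ext i
  obtain ⟨j', hj'⟩ := hd i
  simp [hj', hs.le_iff_le, hs.injective.eq_iff]

theorem stmt4_general {α : Type*} [LinearOrder α] (m : ℕ) (R : Fin m → ℕ → α)
    (k : ℕ)
    (a : Equiv.Perm (Fin m)) (d : Fin m → ℕ)
    (ha : SortsRevPrefixes R a k) (hd : IsDArray R a k d)
    (r : ℕ) (s : Fin r → ℕ) (hs : StrictMono s)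
    (hsurj : ∀ i : Fin m, ∃ j : Fin r, d i = s j)
    (hmem : ∀ j : Fin r, ∃ i : Fin m, d i = s j)
    (j : Fin r) (hsj : 2 ≤ s j) :
    segCard R (s j - 1) k =
      ∑ j' ∈ Finset.univ.filter (fun j' : Fin r => j ≤ j'),
        (Finset.univ.filter (fun i : Fin m => d i = s j')).card := by
  have hsk : s j ≤ k + 1 := by
    obtain ⟨i, hi⟩ := hmem j
    exact hi ▸ hd.le_succ i
  rw [hd.segCard_eq_card_filter_lt ha (by omega) (by omega),
    ← card_filter_le_eq_sum_card_fiber d s hs hsurj j]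
  congr 1
  exact filter_congr fun i _ => by omega

theorem stmt4 {α : Type*} [LinearOrder α] (m n : ℕ) (R : Fin m → ℕ → α)
    (k : ℕ) (hk1 : 1 ≤ k) (hk2 : k ≤ n)
    (a : Equiv.Perm (Fin m)) (d : Fin m → ℕ)
    (ha : SortsRevPrefixes R a k) (hd : IsDArray R a k d)
    (r : ℕ) (s : Fin r → ℕ) (hs : StrictMono s)
    (hsurj : ∀ i : Fin m, ∃ j : Fin r, d i = s j)
    (hmem : ∀ j : Fin r, ∃ i : Fin m, d i = s j)
    (j : Fin r) (hsj : 2 ≤ s j) :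
    segCard R (s j - 1) k =
      ∑ j' ∈ Finset.univ.filter (fun j' : Fin r => j ≤ j'),
        (Finset.univ.filter (fun i : Fin m => d i = s j')).card :=
  stmt4_general m R k a d ha hd r s hs hsurj hmem j hsj
end

section
/- Any segmentation S of R into segments each of length at least L induces a founder set F of size max{|R[j,k]| : R[j,k] ∈ S} together with a parse of R in terms of F in which any two crossover points are at distance at least L. Conversely, if F is a founder set of R with a parse whose sorted crossover points j_1 < ... < j_p satisfy j_q - j_{q-1} ≥ L for all q, then S = {R[j_{q-1}, j_q - 1] : 2 ≤ q ≤ p} is a segmentation of R with segments of length ≥ L and max{|R[j,k]| : R[j,k] ∈ S} ≤ |F|. Consequently the optimal values of the minimum founder set problem and the minimum segmentation problem coincide. -/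
/-- A segmentation of the column range `[1, n]` with all segments of length at
least `L`, encoded by its set `X` of segment starting points together with the
sentinel `n + 1`: the segments are the intervals between consecutive elements
of `X`.  Consecutive elements being at distance `≥ L` is equivalent to all
pairwise distances being `≥ L`. -/
def IsBoundarySet (n L : ℕ) (X : Finset ℕ) : Prop :=
  1 ∈ X ∧ n + 1 ∈ X ∧ (∀ x ∈ X, 1 ≤ x ∧ x ≤ n + 1) ∧
    ∀ x ∈ X, ∀ y ∈ X, x < y → L ≤ y - x

/-- The cost `max {|R[j,k]| : R[j,k] ∈ S}` of the segmentation encoded by the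
boundary set `X`: the maximum number of distinct substrings over the segments
`[x, y-1]` determined by consecutive boundaries `x < y` of `X`. -/
def segCost {α : Type*} [DecidableEq α] {m : ℕ} (R : Fin m → ℕ → α) (X : Finset ℕ) : ℕ :=
  X.sup fun x => X.sup fun y =>
    if x < y ∧ ∀ z ∈ X, ¬(x < z ∧ z < y) then segCard R x (y - 1) else 0

/-- `F`, together with the parse `P`, is a founder set for the strings `R`
(of length `n`): each `R i` agrees at every position `j ∈ [1, n]` with the
founder assigned to it there. -/
def IsFounderParse {α : Type*} {m d : ℕ} (R : Fin m → ℕ → α) (n : ℕ)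
    (F : Fin d → ℕ → α) (P : Fin m → ℕ → Fin d) : Prop :=
  ∀ i : Fin m, ∀ j : ℕ, 1 ≤ j → j ≤ n → R i j = F (P i j) j

/-- The set of crossover points of the parse `P i`: positions `j` where
`P i (j-1) ≠ P i j`, together with `1` and `n + 1`. -/
def crossovers {m d : ℕ} (n : ℕ) (P : Fin m → ℕ → Fin d) (i : Fin m) : Finset ℕ :=
  insert 1 (insert (n + 1) ((Finset.Icc 2 n).filter fun j => P i (j - 1) ≠ P i j))

open Finset

/-- start of the segment containing `j` -/
def segOf (X : Finset ℕ) (j : ℕ) : ℕ :=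
  if h : (X.filter (· ≤ j)).Nonempty then (X.filter (· ≤ j)).max' h else 0

/-- next boundary after `x` -/
def nxtOf (X : Finset ℕ) (x : ℕ) : ℕ :=
  if h : (X.filter (x < ·)).Nonempty then (X.filter (x < ·)).min' h else 0

lemma segOf_mem {X : Finset ℕ} (h1 : 1 ∈ X) {j : ℕ} (hj : 1 ≤ j) :
    segOf X j ∈ X ∧ segOf X j ≤ j ∧ ∀ z ∈ X, z ≤ j → z ≤ segOf X j := by
  have hne : (X.filter (· ≤ j)).Nonempty := ⟨1, by simp [h1, hj]⟩
  rw [segOf, dif_pos hne]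
  have hmem := (X.filter (· ≤ j)).max'_mem hne
  rw [mem_filter] at hmem
  exact ⟨hmem.1, hmem.2, fun z hz hzj => Finset.le_max' (X.filter (· ≤ j)) z (mem_filter.2 ⟨hz, hzj⟩)⟩

lemma seg_spec {X : Finset ℕ} {n : ℕ} (h1 : 1 ∈ X) (htop : n + 1 ∈ X)
    {j : ℕ} (hj1 : 1 ≤ j) (hjn : j ≤ n) :
    segOf X j ∈ X ∧ segOf X j ≤ j ∧ nxtOf X (segOf X j) ∈ X ∧
    segOf X j < nxtOf X (segOf X j) ∧ j < nxtOf X (segOf X j) ∧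
    (∀ z ∈ X, ¬(segOf X j < z ∧ z < nxtOf X (segOf X j))) := by
  obtain ⟨hmem, hle, hmax⟩ := segOf_mem h1 hj1
  have hne : (X.filter (segOf X j < ·)).Nonempty := ⟨n + 1, by
    simp only [mem_filter]; exact ⟨htop, by omega⟩⟩
  have hdef : nxtOf X (segOf X j) = (X.filter (segOf X j < ·)).min' hne := by
    rw [nxtOf, dif_pos hne]
  have hmem' := (X.filter (segOf X j < ·)).min'_mem hne
  rw [mem_filter] at hmem'
  have hmin : ∀ z ∈ X, segOf X j < z → (X.filter (segOf X j < ·)).min' hne ≤ z :=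
    fun z hz hzgt => min'_le _ _ (mem_filter.2 ⟨hz, hzgt⟩)
  rw [hdef]
  refine ⟨hmem, hle, hmem'.1, hmem'.2, ?_, ?_⟩
  · by_contra hcon
    push_neg at hcon
    have := hmax _ hmem'.1 hcon
    omega
  · rintro z hz ⟨hz1, hz2⟩
    have := hmin z hz hz1
    omega

def segSetAux {α : Type*} [DecidableEq α] {m : ℕ} (R : Fin m → ℕ → α) (X : Finset ℕ)
    (x : ℕ) : Finset (Fin (nxtOf X x - 1 + 1 - x) → α) :=
  Finset.univ.image fun i => fun t : Fin (nxtOf X x - 1 + 1 - x) => R i (x + t)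

lemma segSetAux_card {α : Type*} [DecidableEq α] {m : ℕ} (R : Fin m → ℕ → α)
    (X : Finset ℕ) (x : ℕ) : (segSetAux R X x).card = segCard R x (nxtOf X x - 1) := rfl

lemma mem_segSetAux {α : Type*} [DecidableEq α] {m : ℕ} (R : Fin m → ℕ → α)
    (X : Finset ℕ) (x : ℕ) (i : Fin m) :
    (fun t : Fin (nxtOf X x - 1 + 1 - x) => R i (x + t)) ∈ segSetAux R X x :=
  Finset.mem_image.2 ⟨i, Finset.mem_univ i, rfl⟩

noncomputable def pidx {α : Type*} [DecidableEq α] {m : ℕ} (R : Fin m → ℕ → α)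
    (X : Finset ℕ) (x : ℕ) (i : Fin m) : ℕ :=
  ((segSetAux R X x).equivFin ⟨_, mem_segSetAux R X x i⟩ : Fin _).val

lemma pidx_lt {α : Type*} [DecidableEq α] {m : ℕ} (R : Fin m → ℕ → α) (X : Finset ℕ)
    (x : ℕ) (i : Fin m) : pidx R X x i < (segSetAux R X x).card :=
  Fin.is_lt _

lemma segCard_pos {α : Type*} [DecidableEq α] {m : ℕ} (hm : 0 < m) (R : Fin m → ℕ → α)
    (j k : ℕ) : 0 < segCard R j k :=
  Finset.card_pos.2 ⟨_, Finset.mem_image.2 ⟨⟨0, hm⟩, Finset.mem_univ _, rfl⟩⟩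

lemma le_segCost {α : Type*} [DecidableEq α] {m : ℕ} (R : Fin m → ℕ → α) (X : Finset ℕ)
    {x y : ℕ} (hx : x ∈ X) (hy : y ∈ X) (hxy : x < y)
    (hcons : ∀ z ∈ X, ¬(x < z ∧ z < y)) :
    segCard R x (y - 1) ≤ segCost R X := by
  have h2 : (X.sup fun y' => if x < y' ∧ ∀ z ∈ X, ¬(x < z ∧ z < y') then
      segCard R x (y' - 1) else 0) ≤ segCost R X :=
    Finset.le_sup (f := fun x => X.sup fun y' =>
      if x < y' ∧ ∀ z ∈ X, ¬(x < z ∧ z < y') then segCard R x (y' - 1) else 0) hx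
  refine le_trans ?_ h2
  have h3 := Finset.le_sup (f := fun y' =>
    if x < y' ∧ ∀ z ∈ X, ¬(x < z ∧ z < y') then segCard R x (y' - 1) else 0) hy
  exact le_trans (le_of_eq (if_pos ⟨hxy, hcons⟩).symm) h3

lemma segCost_pos {α : Type*} [DecidableEq α] {m : ℕ} (hm : 0 < m) (R : Fin m → ℕ → α)
    {n L : ℕ} (hn : 1 ≤ n) {X : Finset ℕ} (hB : IsBoundarySet n L X) :
    0 < segCost R X := by
  obtain ⟨h1, htop, -, -⟩ := hB
  obtain ⟨hmem, hle, hmem', hlt, hjlt, hcons⟩ := seg_spec h1 htop (le_refl 1) hn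
  exact lt_of_lt_of_le (segCard_pos hm R _ _) (le_segCost R X hmem hmem' hlt hcons)

lemma pidx_lt_segCost {α : Type*} [DecidableEq α] {m : ℕ} (R : Fin m → ℕ → α)
    {n : ℕ} {X : Finset ℕ} (h1 : 1 ∈ X) (htop : n + 1 ∈ X) {j : ℕ}
    (hj1 : 1 ≤ j) (hjn : j ≤ n) (i : Fin m) :
    pidx R X (segOf X j) i < segCost R X := by
  obtain ⟨hmem, hle, hmem', hlt, hjlt, hcons⟩ := seg_spec h1 htop hj1 hjn
  exact lt_of_lt_of_le (pidx_lt R X _ i)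
    (by rw [segSetAux_card]; exact le_segCost R X hmem hmem' hlt hcons)

lemma equivFin_symm_pidx {α : Type*} [DecidableEq α] {m : ℕ} (R : Fin m → ℕ → α)
    (X : Finset ℕ) (x : ℕ) (i : Fin m) (h : pidx R X x i < (segSetAux R X x).card) :
    ((segSetAux R X x).equivFin.symm ⟨pidx R X x i, h⟩).1
      = fun t : Fin (nxtOf X x - 1 + 1 - x) => R i (x + t) := by
  have h0 : (⟨pidx R X x i, h⟩ : Fin (segSetAux R X x).card)
      = (segSetAux R X x).equivFin ⟨_, mem_segSetAux R X x i⟩ := rfl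
  rw [h0, Equiv.symm_apply_apply]

lemma construct {α : Type*} [DecidableEq α] {m : ℕ} (n L : ℕ) (hm : 0 < m) (hn : 1 ≤ n)
    (R : Fin m → ℕ → α) (X : Finset ℕ) (hB : IsBoundarySet n L X) :
    ∃ (F : Fin (segCost R X) → ℕ → α) (P : Fin m → ℕ → Fin (segCost R X)),
      IsFounderParse R n F P ∧ ∀ i, crossovers n P i ⊆ X := by
  classical
  obtain ⟨h1, htop, hrange, hgap⟩ := hB
  refine ⟨fun f j => if h : (f : ℕ) < (segSetAux R X (segOf X j)).card ∧
      j - segOf X j < nxtOf X (segOf X j) - 1 + 1 - segOf X j then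
      ((segSetAux R X (segOf X j)).equivFin.symm ⟨(f : ℕ), h.1⟩).1 ⟨j - segOf X j, h.2⟩
    else R ⟨0, hm⟩ j,
    fun i j => ⟨pidx R X (segOf X (max 1 (min j n))) i,
      pidx_lt_segCost R h1 htop (le_max_left 1 _) (by omega) i⟩, ?_, ?_⟩
  · intro i j hj1 hjn
    obtain ⟨hmem, hle, hmem', hlt, hjlt, hcons⟩ := seg_spec h1 htop hj1 hjn
    have hclamp : max 1 (min j n) = j := by omega
    simp only [hclamp]
    have hcond : pidx R X (segOf X j) i < (segSetAux R X (segOf X j)).card ∧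
        j - segOf X j < nxtOf X (segOf X j) - 1 + 1 - segOf X j :=
      ⟨pidx_lt R X _ i, by omega⟩
    rw [dif_pos hcond]
    rw [equivFin_symm_pidx R X (segOf X j) i hcond.1]
    show R i j = R i (segOf X j + (j - segOf X j))
    congr 1
    omega
  · intro i j hj
    simp only [crossovers, mem_insert, mem_filter, mem_Icc] at hj
    rcases hj with rfl | rfl | ⟨⟨hj2, hjn⟩, hne⟩
    · exact h1
    · exact htop
    · have c1 : max 1 (min (j - 1) n) = j - 1 := by omega
      have c2 : max 1 (min j n) = j := by omega
      have hseg : segOf X (j - 1) ≠ segOf X j := by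
        intro h
        apply hne
        exact Fin.ext (by simp only [c1, c2, h])
      obtain ⟨ha, ha2, ha3⟩ := segOf_mem h1 (show 1 ≤ j - 1 by omega)
      obtain ⟨hb, hb2, hb3⟩ := segOf_mem h1 (show 1 ≤ j by omega)
      have hab : segOf X (j - 1) ≤ segOf X j := hb3 _ ha (by omega)
      have hbj : segOf X j = j := by
        rcases Nat.lt_or_ge (segOf X j) j with h' | h'
        · have := ha3 _ hb (by omega)
          omega
        · omega
      exact hbj ▸ hb

lemma converse {α : Type*} [DecidableEq α] {m : ℕ} (n L : ℕ) (hm : 0 < m) (hn : 1 ≤ n)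
    (R : Fin m → ℕ → α) (d : ℕ) (F : Fin d → ℕ → α) (P : Fin m → ℕ → Fin d)
    (hFP : IsFounderParse R n F P)
    (hsp : ∀ x ∈ Finset.univ.biUnion (crossovers n P),
      ∀ y ∈ Finset.univ.biUnion (crossovers n P), x < y → L ≤ y - x) :
    IsBoundarySet n L (Finset.univ.biUnion (crossovers n P)) ∧
      segCost R (Finset.univ.biUnion (crossovers n P)) ≤ d := by
  classical
  set X := Finset.univ.biUnion (crossovers n P) with hX
  have i0 : Fin m := ⟨0, hm⟩
  have h1 : 1 ∈ X := mem_biUnion.2 ⟨i0, mem_univ _, by simp [crossovers]⟩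
  have htop : n + 1 ∈ X := mem_biUnion.2 ⟨i0, mem_univ _, by simp [crossovers]⟩
  have hrange : ∀ x ∈ X, 1 ≤ x ∧ x ≤ n + 1 := by
    intro x hx
    obtain ⟨i, -, hc⟩ := mem_biUnion.1 hx
    simp only [crossovers, mem_insert, mem_filter, mem_Icc] at hc
    rcases hc with rfl | rfl | ⟨⟨h2, h3⟩, -⟩ <;> omega
  refine ⟨⟨h1, htop, hrange, hsp⟩, ?_⟩
  apply Finset.sup_le
  intro x hx
  apply Finset.sup_le
  intro y hy
  split_ifs with h
  · obtain ⟨hxy, hcons⟩ := h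
    have hx1 : 1 ≤ x := (hrange x hx).1
    have hyn : y ≤ n + 1 := (hrange y hy).2
    have hconst : ∀ i : Fin m, ∀ j, x ≤ j → j ≤ y - 1 → P i j = P i x := by
      intro i j
      induction j with
      | zero => intro h0 _; omega
      | succ j ih =>
        intro hxj hjy
        rcases Nat.eq_or_lt_of_le hxj with heq | hlt
        · rw [← heq]
        · have hPj := ih (by omega) (by omega)
          by_cases hc : P i j = P i (j + 1)
          · rw [← hc, hPj]
          · exfalso
            have hmemX : j + 1 ∈ X := mem_biUnion.2 ⟨i, mem_univ _, by
              simp only [crossovers, mem_insert, mem_filter, mem_Icc]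
              right; right
              exact ⟨⟨by omega, by omega⟩, by simpa using hc⟩⟩
            exact hcons _ hmemX ⟨by omega, by omega⟩
    have hsub : (Finset.univ.image fun i : Fin m =>
        fun t : Fin (y - 1 + 1 - x) => R i (x + t)) ⊆
        (Finset.univ.image fun f : Fin d => fun t : Fin (y - 1 + 1 - x) => F f (x + t)) := by
      intro s hs
      obtain ⟨i, -, rfl⟩ := mem_image.1 hs
      refine mem_image.2 ⟨P i x, mem_univ _, ?_⟩
      funext t
      have ht := t.isLt
      have h1' : 1 ≤ x + (t : ℕ) := by omega
      have hn' : x + (t : ℕ) ≤ n := by omega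
      rw [← hconst i (x + (t : ℕ)) (by omega) (by omega)]
      exact (hFP i (x + (t : ℕ)) h1' hn').symm
    calc segCard R x (y - 1) ≤ _ := Finset.card_le_card hsub
      _ ≤ (Finset.univ : Finset (Fin d)).card := Finset.card_image_le
      _ = d := by simp
  · exact Nat.zero_le d

theorem stmt6 {α : Type*} [DecidableEq α] (m n L : ℕ) (hm : 0 < m) (hn : 1 ≤ n)
    (hL : 1 ≤ L) (R : Fin m → ℕ → α) :
    -- a segmentation induces a founder set of size equal to its cost, with an
    -- L-spaced parse whose crossover points lie at segment boundaries
    (∀ X : Finset ℕ, IsBoundarySet n L X →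
      ∃ (d : ℕ) (F : Fin d → ℕ → α) (P : Fin m → ℕ → Fin d),
        IsFounderParse R n F P ∧ d = segCost R X ∧
        (∀ i : Fin m, crossovers n P i ⊆ X) ∧
        ∀ x ∈ Finset.univ.biUnion (crossovers n P),
          ∀ y ∈ Finset.univ.biUnion (crossovers n P), x < y → L ≤ y - x) ∧
    -- conversely, an L-spaced parse induces a segmentation of cost at most |F|
    (∀ (d : ℕ) (F : Fin d → ℕ → α) (P : Fin m → ℕ → Fin d),
      IsFounderParse R n F P →
      (∀ x ∈ Finset.univ.biUnion (crossovers n P),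
        ∀ y ∈ Finset.univ.biUnion (crossovers n P), x < y → L ≤ y - x) →
      IsBoundarySet n L (Finset.univ.biUnion (crossovers n P)) ∧
        segCost R (Finset.univ.biUnion (crossovers n P)) ≤ d) ∧
    -- consequently, the optimal values of the two problems coincide
    sInf {K : ℕ | ∃ X : Finset ℕ, IsBoundarySet n L X ∧ segCost R X ≤ K} =
      sInf {K : ℕ | ∃ (d : ℕ) (F : Fin d → ℕ → α) (P : Fin m → ℕ → Fin d),
        d ≤ K ∧ IsFounderParse R n F P ∧
        ∀ x ∈ Finset.univ.biUnion (crossovers n P),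
          ∀ y ∈ Finset.univ.biUnion (crossovers n P), x < y → L ≤ y - x} := by
  classical
  have part1 : ∀ X : Finset ℕ, IsBoundarySet n L X →
      ∃ (d : ℕ) (F : Fin d → ℕ → α) (P : Fin m → ℕ → Fin d),
        IsFounderParse R n F P ∧ d = segCost R X ∧
        (∀ i : Fin m, crossovers n P i ⊆ X) ∧
        ∀ x ∈ Finset.univ.biUnion (crossovers n P),
          ∀ y ∈ Finset.univ.biUnion (crossovers n P), x < y → L ≤ y - x := by
    intro X hB
    obtain ⟨F, P, hFP, hsub⟩ := construct n L hm hn R X hB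
    have hbi : Finset.univ.biUnion (crossovers n P) ⊆ X := by
      intro x hx
      obtain ⟨i, -, hc⟩ := Finset.mem_biUnion.1 hx
      exact hsub i hc
    exact ⟨segCost R X, F, P, hFP, rfl, hsub,
      fun x hx y hy hxy => hB.2.2.2 x (hbi hx) y (hbi hy) hxy⟩
  have part2 := fun d F P hFP hsp => converse n L hm hn R d F P hFP hsp
  refine ⟨part1, part2, ?_⟩
  congr 1
  ext K
  constructor
  · rintro ⟨X, hB, hle⟩
    obtain ⟨d, F, P, hFP, hd, -, hsp⟩ := part1 X hB
    exact ⟨d, F, P, hd ▸ hle, hFP, hsp⟩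
  · rintro ⟨d, F, P, hdK, hFP, hsp⟩
    obtain ⟨hB, hle⟩ := part2 d F P hFP hsp
    exact ⟨_, hB, hle.trans hdK⟩
end

section
/- Let M be as in the minimum segmentation recurrence and, for fixed k ≥ 2L, let 0 = j_{k,0} < j_{k,1} < ... < j_{k,r_k} < j_{k,r_k+1} = k-L+1 where j_{k,1},...,j_{k,r_k} are exactly the positions j ∈ [1,k-L] with |R[j,k]| ≠ |R[j+1,k]|. Then min over 0 ≤ j ≤ k-L of max{M(j), |R[j+1,k]|} equals min over 0 ≤ h ≤ r_k of max{|R[j_{k,h+1}, k]|, min{M(j) : j_{k,h} ≤ j < j_{k,h+1}}}. -/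
/-! On the block `[J h, J (h+1))` no index is a jump of `x ↦ |R[x,k]|`, so `|R[j+1,k]|` equals
`|R[J (h+1), k]|` for every `j` in the block and `max` distributes over the minimum of `M` on it;
the blocks cover `[0, k-L]`. -/

open Finset

lemma eq_of_forall_mem_Ico_eq_succ {β : Type*} {s : ℕ → β} {a b : ℕ} (hab : a ≤ b)
    (h : ∀ x ∈ Ico a b, s x = s (x + 1)) : s a = s b := by
  induction b, hab using Nat.le_induction with
  | base => rfl
  | succ b hab ih =>
    rw [ih fun x hx => h x (by simp only [mem_Ico] at hx ⊢; omega), h b (by simp [hab])]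

lemma Fin.exists_castSucc_le_and_lt_succ {α : Type*} [LinearOrder α] {n : ℕ}
    (J : Fin (n + 1) → α) {a : α} (h0 : J 0 ≤ a) (hlast : a < J (Fin.last n)) :
    ∃ h : Fin n, J h.castSucc ≤ a ∧ a < J h.succ := by
  induction n with
  | zero => exact absurd (h0.trans_lt hlast) (lt_irrefl _)
  | succ n ih =>
    by_cases ha : a < J (Fin.last n).castSucc
    · obtain ⟨h, hle, hlt⟩ := ih (J ∘ Fin.castSucc) h0 ha
      exact ⟨h.castSucc, hle, hlt⟩
    · exact ⟨Fin.last n, not_lt.mp ha, hlast⟩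

lemma Icc_zero_eq_biUnion_Ico {r N : ℕ} {J : Fin (r + 1) → ℕ} (hJ : Monotone J)
    (h0 : J 0 = 0) (hlast : J (Fin.last r) = N + 1) :
    Icc 0 N = univ.biUnion fun h : Fin r => Ico (J h.castSucc) (J h.succ) := by
  ext j
  simp only [mem_Icc, mem_biUnion, mem_univ, true_and, mem_Ico]
  constructor
  · rintro ⟨-, hj⟩
    exact Fin.exists_castSucc_le_and_lt_succ J (h0.trans_le j.zero_le) (by omega)
  · rintro ⟨h, -, hj⟩
    have := hJ (Fin.le_last h.succ)
    omega

lemma eq_of_mem_Ioc_of_jumps_mem_range {β : Type*} {s : ℕ → β} {r N : ℕ}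
    {J : Fin (r + 1) → ℕ} (hJ : Monotone J) (hlast : J (Fin.last r) = N + 1)
    (hjump : ∀ x, 1 ≤ x → x ≤ N → s x ≠ s (x + 1) → x ∈ Set.range J)
    (h : Fin r) {x : ℕ} (hx : J h.castSucc < x) (hx' : x ≤ J h.succ) :
    s x = s (J h.succ) := by
  have hJle := hJ (Fin.le_last h.succ)
  refine eq_of_forall_mem_Ico_eq_succ hx' fun y hy => ?_
  rw [mem_Ico] at hy
  by_contra hne
  obtain ⟨h', rfl⟩ := hjump y (by omega) (by omega) hne
  have hlt : h.castSucc < h' := hJ.reflect_lt (by omega)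
  exact (hJ.reflect_lt hy.2).not_ge (Fin.castSucc_lt_iff_succ_le.mp hlt)

theorem inf_max_eq_inf_max_inf_Ico {β : Type*} [LinearOrder β] [OrderTop β] (M s : ℕ → β)
    {r N : ℕ} {J : Fin (r + 1) → ℕ} (hJ : Monotone J) (h0 : J 0 = 0)
    (hlast : J (Fin.last r) = N + 1)
    (hs : ∀ h : Fin r, ∀ x, J h.castSucc < x → x ≤ J h.succ → s x = s (J h.succ)) :
    ((Icc 0 N).inf fun j => max (M j) (s (j + 1))) =
      univ.inf fun h : Fin r => max (s (J h.succ)) ((Ico (J h.castSucc) (J h.succ)).inf M) := by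
  rw [Icc_zero_eq_biUnion_Ico hJ h0 hlast, inf_biUnion]
  refine inf_congr rfl fun h _ => ?_
  rw [inf_sup_distrib_left]
  refine inf_congr rfl fun j hj => ?_
  rw [mem_Ico] at hj
  rw [hs h (j + 1) (by omega) (by omega), max_comm]

theorem stmt8_general {α : Type*} [DecidableEq α] (m L : ℕ)
    (R : Fin m → ℕ → α) (M : ℕ → ℕ∞) (k : ℕ)
    (r : ℕ) (J : Fin (r + 2) → ℕ) (hJmono : StrictMono J)
    (hJ0 : J 0 = 0) (hJlast : J (Fin.last (r + 1)) = k - L + 1)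
    (hJall : ∀ x, 1 ≤ x → x ≤ k - L → segCard R x k ≠ segCard R (x + 1) k →
      ∃ h : Fin (r + 2), 0 < (h : ℕ) ∧ (h : ℕ) < r + 1 ∧ J h = x) :
    ((Finset.Icc 0 (k - L)).inf fun j => max (M j) (segCard R (j + 1) k : ℕ∞)) =
      Finset.univ.inf fun h : Fin (r + 1) =>
        max (segCard R (J h.succ) k : ℕ∞)
          ((Finset.Ico (J h.castSucc) (J h.succ)).inf M) := by
  have hjump : ∀ x, 1 ≤ x → x ≤ k - L → segCard R x k ≠ segCard R (x + 1) k →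
      x ∈ Set.range J := fun x h1 h2 hne =>
    let ⟨h, _, _, hJh⟩ := hJall x h1 h2 hne
    ⟨h, hJh⟩
  exact inf_max_eq_inf_max_inf_Ico M _ hJmono.monotone hJ0 hJlast fun h x hx hx' =>
    congrArg Nat.cast (eq_of_mem_Ioc_of_jumps_mem_range hJmono.monotone hJlast hjump h hx hx')

theorem stmt8 {α : Type*} [DecidableEq α] (m n L : ℕ) (hL : 1 ≤ L)
    (R : Fin m → ℕ → α) (M : ℕ → ℕ∞) (k : ℕ) (hk : 2 * L ≤ k) (hkn : k ≤ n)
    (r : ℕ) (J : Fin (r + 2) → ℕ) (hJmono : StrictMono J)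
    (hJ0 : J 0 = 0) (hJlast : J (Fin.last (r + 1)) = k - L + 1)
    (hJchange : ∀ h : Fin (r + 2), 0 < (h : ℕ) → (h : ℕ) < r + 1 →
      1 ≤ J h ∧ J h ≤ k - L ∧ segCard R (J h) k ≠ segCard R (J h + 1) k)
    (hJall : ∀ x, 1 ≤ x → x ≤ k - L → segCard R x k ≠ segCard R (x + 1) k →
      ∃ h : Fin (r + 2), 0 < (h : ℕ) ∧ (h : ℕ) < r + 1 ∧ J h = x) :
    ((Finset.Icc 0 (k - L)).inf fun j => max (M j) (segCard R (j + 1) k : ℕ∞)) =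
      Finset.univ.inf fun h : Fin (r + 1) =>
        max (segCard R (J h.succ) k : ℕ∞)
          ((Finset.Ico (J h.castSucc) (J h.succ)).inf M) :=
  stmt8_general m L R M k r J hJmono hJ0 hJlast hJall
end

section
/- Let p_1,...,p_m be nonnegative integers and ℓ̄ ≥ 2 a real number. If for each j there exist positive reals q_1(j),...,q_{p_j}(j) with q_h(j) ≥ 2^{h-1} and the total sum ∑_{j=1}^m ∑_{h=1}^{p_j} q_h(j) ≤ m·ℓ̄, then ∑_{j=1}^m p_j ≤ 2m·log₂ ℓ̄. -/
/-!
Since `q_h(j) ≥ 2^(h-1)`, the `j`-th row sum is at least `2^(p_j) - 1`, so `∑ⱼ 2^(p_j) ≤ m ℓ̄ + m ≤ m ℓ̄²`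
(as `ℓ̄ ≥ 2`). By convexity of `x ↦ 2^x`, the left side is at least `m · 2^(P/m)` with `P = ∑ⱼ p_j`;
hence `P/m ≤ log₂ ℓ̄² = 2 log₂ ℓ̄`.
-/

open Finset Real

lemma two_pow_sub_one_le_sum {n : ℕ} (f : Fin n → ℝ) (hf : ∀ h : Fin n, (2 : ℝ) ^ (h : ℕ) ≤ f h) :
    (2 : ℝ) ^ n - 1 ≤ ∑ h, f h :=
  calc (2 : ℝ) ^ n - 1 = ∑ i ∈ range n, (2 : ℝ) ^ i := by rw [geom_sum_eq (by norm_num)]; norm_num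
    _ = ∑ h : Fin n, (2 : ℝ) ^ (h : ℕ) := (Fin.sum_univ_eq_sum_range _ n).symm
    _ ≤ ∑ h, f h := sum_le_sum fun h _ => hf h

lemma card_mul_rpow_average_le_sum {ι : Type*} {s : Finset ι} (hs : s.Nonempty) {b : ℝ} (hb : 0 < b)
    (x : ι → ℝ) : #s * b ^ ((∑ i ∈ s, x i) / #s) ≤ ∑ i ∈ s, b ^ x i := by
  have hcard : (0 : ℝ) < #s := by exact_mod_cast hs.card_pos
  have hjensen := (convexOn_rpow_left hb).map_sum_le (t := s) (w := fun _ => 1 / (#s : ℝ)) (p := x)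
    (fun _ _ => by positivity) (by simp [hcard.ne']) (fun _ _ => Set.mem_univ _)
  simp only [smul_eq_mul, ← mul_sum] at hjensen
  rw [one_div_mul_eq_div] at hjensen
  calc #s * b ^ ((∑ i ∈ s, x i) / #s) ≤ #s * (1 / #s * ∑ i ∈ s, b ^ x i) := by gcongr
    _ = ∑ i ∈ s, b ^ x i := by field_simp

theorem stmt10_general (m : ℕ) (ℓbar : ℝ) (hℓ : 2 ≤ ℓbar)
    (p : Fin m → ℕ) (q : (j : Fin m) → Fin (p j) → ℝ)
    (hqgrow : ∀ (j : Fin m) (h : Fin (p j)), (2 : ℝ) ^ (h : ℕ) ≤ q j h)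
    (hsum : ∑ j : Fin m, ∑ h : Fin (p j), q j h ≤ m * ℓbar) :
    (∑ j : Fin m, (p j : ℝ)) ≤ 2 * m * Real.logb 2 ℓbar := by
  rcases Nat.eq_zero_or_pos m with rfl | hm
  · simp
  have hm' : (0 : ℝ) < m := by exact_mod_cast hm
  have hjensen : m * (2 : ℝ) ^ ((∑ j, (p j : ℝ)) / m) ≤ ∑ j, (2 : ℝ) ^ (p j : ℝ) := by
    simpa using card_mul_rpow_average_le_sum ⟨⟨0, hm⟩, mem_univ _⟩ two_pos fun j => (p j : ℝ)
  have hpow : ∑ j, (2 : ℝ) ^ (p j : ℝ) ≤ m * ℓbar ^ 2 :=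
    calc ∑ j, (2 : ℝ) ^ (p j : ℝ) ≤ ∑ j, ((∑ h, q j h) + 1) := sum_le_sum fun j _ => by
          rw [rpow_natCast]; linarith [two_pow_sub_one_le_sum _ (hqgrow j)]
      _ = (∑ j, ∑ h, q j h) + m := by simp [sum_add_distrib]
      _ ≤ m * ℓbar ^ 2 := by nlinarith [mul_le_mul_of_nonneg_left hℓ hm'.le]
  have hlog : (∑ j, (p j : ℝ)) / m ≤ logb 2 (ℓbar ^ 2) :=
    (le_logb_iff_rpow_le one_lt_two (by positivity)).2 (le_of_mul_le_mul_left (hjensen.trans hpow) hm')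
  rw [logb_pow, div_le_iff₀ hm'] at hlog
  push_cast at hlog
  linarith

theorem stmt10 (m : ℕ) (ℓbar : ℝ) (hℓ : 2 ≤ ℓbar)
    (p : Fin m → ℕ) (q : (j : Fin m) → Fin (p j) → ℝ)
    (hqpos : ∀ (j : Fin m) (h : Fin (p j)), 0 < q j h)
    (hqgrow : ∀ (j : Fin m) (h : Fin (p j)), (2 : ℝ) ^ (h : ℕ) ≤ q j h)
    (hsum : ∑ j : Fin m, ∑ h : Fin (p j), q j h ≤ m * ℓbar) :
    (∑ j : Fin m, (p j : ℝ)) ≤ 2 * m * Real.logb 2 ℓbar :=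
  stmt10_general m ℓbar hℓ p q hqgrow hsum
end

section
/- Let a_k be the pBWT permutation at column k (sorting reversed prefixes R'_{i,k} lexicographically, ties broken so the sort is stable with respect to a_{k-1}). If i ∈ [1,m], i' is the position with a_k[i'] = a_{k-1}[i], and j is the maximum index j < i with R_{a_{k-1}[j]}[k] = R_{a_{k-1}[i]}[k] (assumed to exist), then a_k[i'-1] = a_{k-1}[j] and LCP(R'_{a_k[i'-1],k}, R'_{a_k[i'],k}) = 1 + min{ LCP(R'_{a_{k-1}[ℓ-1],k-1}, R'_{a_{k-1}[ℓ],k-1}) : j < ℓ ≤ i }. If no such j exists, then LCP(R'_{a_k[i'-1],k}, R'_{a_k[i'],k}) = 0. -/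
/-- The length of the longest common prefix of two lists. -/
def lcp {α : Type*} [DecidableEq α] : List α → List α → ℕ
  | a :: s, b :: t => if a = b then lcp s t + 1 else 0
  | _, _ => 0

section Lcp

variable {α : Type*}

@[simp]
lemma lcp_nil_left [DecidableEq α] (t : List α) : lcp [] t = 0 := by
  cases t <;> rfl

@[simp]
lemma lcp_nil_right [DecidableEq α] (s : List α) : lcp s [] = 0 := by
  cases s <;> rfl

@[simp]
lemma lcp_cons_cons [DecidableEq α] (a b : α) (s t : List α) :
    lcp (a :: s) (b :: t) = if a = b then lcp s t + 1 else 0 :=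
  rfl

lemma min_lcp_le_lcp [DecidableEq α] : ∀ s t u : List α, min (lcp s t) (lcp t u) ≤ lcp s u
  | [], _, _ | _ :: _, [], _ | _ :: _, _ :: _, [] => by simp
  | a :: s, b :: t, c :: u => by
    have := min_lcp_le_lcp s t u
    by_cases hab : a = b
    · subst hab
      by_cases hac : a = c
      · subst hac
        simp only [lcp_cons_cons, if_true]
        omega
      · simp [hac]
    · simp [hab]

variable [LinearOrder α]

lemma List.head_le_of_cons_le {a b : α} {s t : List α} (h : a :: s ≤ b :: t) : a ≤ b := by
  rcases h.lt_or_eq with h | h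
  · exact List.head_le_of_lt h
  · exact (List.cons.inj h).1.le

lemma List.tail_le_of_cons_le_cons {a : α} {s t : List α} (h : a :: s ≤ a :: t) : s ≤ t := by
  rcases h.lt_or_eq with h | h
  · exact le_of_lt (List.lex_cons_iff.1 h)
  · exact (List.cons.inj h).2.le

lemma List.not_cons_le_nil (a : α) (s : List α) : ¬ a :: s ≤ [] := by
  rintro h
  rcases h.lt_or_eq with h | h
  · cases h
  · cases h

lemma lcp_le_min_of_le_of_le : ∀ s t u : List α, s ≤ t → t ≤ u →
    lcp s u ≤ min (lcp s t) (lcp t u)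
  | [], _, _, _, _ | _ :: _, _, [], _, _ => by simp
  | _ :: _, [], _ :: _, hst, _ => absurd hst (List.not_cons_le_nil _ _)
  | a :: s, b :: t, c :: u, hst, htu => by
    by_cases hac : a = c
    · subst hac
      obtain rfl : a = b :=
        (List.head_le_of_cons_le hst).antisymm (List.head_le_of_cons_le htu)
      simpa using lcp_le_min_of_le_of_le s t u (List.tail_le_of_cons_le_cons hst)
        (List.tail_le_of_cons_le_cons htu)
    · simp [hac]

lemma lcp_eq_min_of_le_of_le {s t u : List α} (hst : s ≤ t) (htu : t ≤ u) :
    lcp s u = min (lcp s t) (lcp t u) :=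
  (lcp_le_min_of_le_of_le s t u hst htu).antisymm (min_lcp_le_lcp s t u)

lemma lcp_eq_inf_Ioc {f : ℕ → List α} {j i : ℕ} (hf : MonotoneOn f (Set.Icc j i))
    (hji : j < i) :
    (lcp (f j) (f i) : ℕ∞) = (Finset.Ioc j i).inf fun l => (lcp (f (l - 1)) (f l) : ℕ∞) := by
  induction i, hji using Nat.le_induction with
  | base => simp
  | succ i hji ih =>
    have hji' : f j ≤ f i := hf ⟨le_rfl, by omega⟩ ⟨by omega, by omega⟩ (by omega)
    have hii' : f i ≤ f (i + 1) := hf ⟨by omega, by omega⟩ ⟨by omega, le_rfl⟩ (by omega)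
    rw [← Finset.insert_Ioc_right_eq_Ioc_add_one (by omega), Finset.inf_insert,
      ← ih (hf.mono (Set.Icc_subset_Icc_right (by omega))), Nat.add_sub_cancel,
      lcp_eq_min_of_le_of_le hji' hii', Nat.mono_cast.map_min, inf_comm]

lemma lcp_eq_inf_of_monotone {m : ℕ} {g : Fin m → List α} (hg : Monotone g) {j i : Fin m}
    (hji : j < i) :
    (lcp (g j) (g i) : ℕ∞) = (Finset.univ.filter fun l : Fin m => (j : ℕ) < l ∧ l ≤ i).inf
      fun l => (lcp (g ⟨(l : ℕ) - 1, lt_of_le_of_lt (Nat.sub_le _ _) l.isLt⟩) (g l) : ℕ∞) := by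
  let f : ℕ → List α := fun p => if h : p < m then g ⟨p, h⟩ else []
  have hf : ∀ l : Fin m, f l = g l := fun l => dif_pos l.isLt
  have hmono : MonotoneOn f (Set.Icc j i) := fun p hp q hq hpq => by
    simp only [f, dif_pos (hp.2.trans_lt i.isLt), dif_pos (hq.2.trans_lt i.isLt)]
    exact hg hpq
  have hfilter : (Finset.univ.filter fun l : Fin m => (j : ℕ) < l ∧ l ≤ i) = Finset.Ioc j i := by
    ext l
    simp only [Finset.mem_filter, Finset.mem_univ, true_and, Finset.mem_Ioc, Fin.lt_def]
  rw [← hf, ← hf, lcp_eq_inf_Ioc hmono hji, hfilter, ← Fin.map_valEmbedding_Ioc, Finset.inf_map]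
  refine Finset.inf_congr rfl fun l _ => ?_
  simp only [Function.comp_apply, Fin.valEmbedding_apply, ← hf]

end Lcp

section PositionalBWT

variable {α : Type*} {m : ℕ} {R : Fin m → ℕ → α} {k : ℕ}

lemma revPrefix_of_pos (R : Fin m → ℕ → α) (x : Fin m) (hk : 0 < k) :
    revPrefix R x k = R x k :: revPrefix R x (k - 1) := by
  obtain ⟨k, rfl⟩ := Nat.exists_eq_add_of_lt hk
  simp [revPrefix, List.range_succ_eq_map, Function.comp_def, Nat.succ_sub_succ]

lemma SortsRevPrefixes.monotone_letter [LinearOrder α] {a : Equiv.Perm (Fin m)}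
    (ha : SortsRevPrefixes R a k) (hk : 0 < k) : Monotone fun p => R (a p) k := fun p q hpq => by
  have hpq := ha p q hpq
  rw [revPrefix_of_pos R _ hk, revPrefix_of_pos R _ hk] at hpq
  exact List.head_le_of_cons_le hpq

def StableByLetter (R : Fin m → ℕ → α) (a' a : Equiv.Perm (Fin m)) (k : ℕ) : Prop :=
  ∀ i₁ i₂ : Fin m, i₁ < i₂ → R (a' i₁) k = R (a' i₂) k → a.symm (a' i₁) < a.symm (a' i₂)

namespace StableByLetter

variable {a' a : Equiv.Perm (Fin m)} (hst : StableByLetter R a' a k)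
include hst

lemma le_of_symm_le {l₁ l₂ : Fin m} (hc : R (a' l₁) k = R (a' l₂) k)
    (hle : a.symm (a' l₁) ≤ a.symm (a' l₂)) : l₁ ≤ l₂ :=
  not_lt.1 fun hlt => (hst l₂ l₁ hlt hc.symm).not_ge hle

lemma lt_of_symm_lt {l₁ l₂ : Fin m} (hc : R (a' l₁) k = R (a' l₂) k)
    (hlt : a.symm (a' l₁) < a.symm (a' l₂)) : l₁ < l₂ :=
  (hst.le_of_symm_le hc hlt.le).lt_of_ne fun h => hlt.ne (h ▸ rfl)

lemma letter_ne_of_no_prev_occurrence {i : Fin m} (hno : ∀ j < i, R (a' j) k ≠ R (a' i) k)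
    {p : Fin m} (hp : p < a.symm (a' i)) : R (a p) k ≠ R (a' i) k := fun hc => by
  obtain ⟨l, hl⟩ := a'.surjective (a p)
  rw [← hl] at hc
  exact hno l (hst.lt_of_symm_lt hc (by rwa [hl, a.symm_apply_apply])) hc

lemma apply_eq_of_prev_occurrence [LinearOrder α] (hk : 0 < k) (ha : SortsRevPrefixes R a k)
    {i j : Fin m} (hji : j < i) (hcj : R (a' j) k = R (a' i) k)
    (hbetween : ∀ l, j < l → l < i → R (a' l) k ≠ R (a' i) k)
    {p : Fin m} (hp : (p : ℕ) = a.symm (a' i) - 1) : a p = a' j := by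
  have hj : a.symm (a' j) < a.symm (a' i) := hst j i hji hcj
  have hjp : a.symm (a' j) ≤ p := by rw [Fin.le_def, hp]; omega
  have hpi : p < a.symm (a' i) := by rw [Fin.lt_def, hp]; omega
  have hc : R (a p) k = R (a' i) k := by
    refine le_antisymm ?_ ?_
    · simpa using ha.monotone_letter hk hpi.le
    · simpa [hcj] using ha.monotone_letter hk hjp
  obtain ⟨l, hl⟩ := a'.surjective (a p)
  have hlp : a.symm (a' l) = p := by rw [hl, a.symm_apply_apply]
  rw [← hl] at hc ⊢
  have hli : l < i := hst.lt_of_symm_lt hc (by rwa [hlp])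
  have hjl : j ≤ l := hst.le_of_symm_le (hcj.trans hc.symm) (by rwa [hlp])
  have hlj : l ≤ j := not_lt.1 fun h => hbetween l h hli hc
  rw [le_antisymm hlj hjl]

end StableByLetter

end PositionalBWT

theorem stmt13_general {α : Type*} [LinearOrder α] (m : ℕ) (R : Fin m → ℕ → α)
    (k : ℕ) (hk : 1 ≤ k)
    (a' a : Equiv.Perm (Fin m))
    (ha' : SortsRevPrefixes R a' (k - 1)) (ha : SortsRevPrefixes R a k)
    (hstable : ∀ i₁ i₂ : Fin m, i₁ < i₂ → R (a' i₁) k = R (a' i₂) k →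
      a.symm (a' i₁) < a.symm (a' i₂))
    (i : Fin m) (i' : Fin m) (hi' : i' = a.symm (a' i)) :
    -- if a previous occurrence of the letter R_{a_{k-1}[i]}[k] exists
    (∀ j : Fin m, j < i → R (a' j) k = R (a' i) k →
      (∀ l : Fin m, j < l → l < i → R (a' l) k ≠ R (a' i) k) →
      a ⟨(i' : ℕ) - 1, lt_of_le_of_lt (Nat.sub_le _ _) i'.isLt⟩ = a' j ∧
      (lcp (revPrefix R (a ⟨(i' : ℕ) - 1, lt_of_le_of_lt (Nat.sub_le _ _) i'.isLt⟩) k)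
          (revPrefix R (a i') k) : ℕ∞) =
        1 + (Finset.univ.filter (fun l : Fin m => (j : ℕ) < (l : ℕ) ∧ l ≤ i)).inf
          (fun l =>
            (lcp (revPrefix R (a' ⟨(l : ℕ) - 1, lt_of_le_of_lt (Nat.sub_le _ _) l.isLt⟩) (k - 1))
              (revPrefix R (a' l) (k - 1)) : ℕ∞))) ∧
    -- if no such previous occurrence exists
    ((∀ j : Fin m, j < i → R (a' j) k ≠ R (a' i) k) → 0 < (i' : ℕ) →
      lcp (revPrefix R (a ⟨(i' : ℕ) - 1, lt_of_le_of_lt (Nat.sub_le _ _) i'.isLt⟩) k)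
        (revPrefix R (a i') k) = 0) := by
  have hst : StableByLetter R a' a k := hstable
  subst hi'
  rw [Equiv.apply_symm_apply]
  refine ⟨fun j hji hcj hbetween => ?_, fun hno hpos => ?_⟩
  · have hpred := hst.apply_eq_of_prev_occurrence hk ha hji hcj hbetween
      (p := ⟨_, lt_of_le_of_lt (Nat.sub_le _ 1) (a.symm (a' i)).isLt⟩) rfl
    refine ⟨hpred, ?_⟩
    rw [hpred, revPrefix_of_pos R _ hk, revPrefix_of_pos R _ hk, lcp_cons_cons, if_pos hcj,
      Nat.cast_succ, add_comm, lcp_eq_inf_of_monotone ha' hji]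
  · rw [revPrefix_of_pos R _ hk, revPrefix_of_pos R _ hk, lcp_cons_cons,
      if_neg (hst.letter_ne_of_no_prev_occurrence hno (Fin.lt_def.2 (Nat.sub_lt hpos one_pos)))]

theorem stmt13 {α : Type*} [LinearOrder α] (m n : ℕ) (R : Fin m → ℕ → α)
    (k : ℕ) (hk : 1 ≤ k) (hkn : k ≤ n)
    (a' a : Equiv.Perm (Fin m))
    (ha' : SortsRevPrefixes R a' (k - 1)) (ha : SortsRevPrefixes R a k)
    (hstable : ∀ i₁ i₂ : Fin m, i₁ < i₂ → R (a' i₁) k = R (a' i₂) k →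
      a.symm (a' i₁) < a.symm (a' i₂))
    (i : Fin m) (i' : Fin m) (hi' : i' = a.symm (a' i)) :
    -- if a previous occurrence of the letter R_{a_{k-1}[i]}[k] exists
    (∀ j : Fin m, j < i → R (a' j) k = R (a' i) k →
      (∀ l : Fin m, j < l → l < i → R (a' l) k ≠ R (a' i) k) →
      a ⟨(i' : ℕ) - 1, lt_of_le_of_lt (Nat.sub_le _ _) i'.isLt⟩ = a' j ∧
      (lcp (revPrefix R (a ⟨(i' : ℕ) - 1, lt_of_le_of_lt (Nat.sub_le _ _) i'.isLt⟩) k)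
          (revPrefix R (a i') k) : ℕ∞) =
        1 + (Finset.univ.filter (fun l : Fin m => (j : ℕ) < (l : ℕ) ∧ l ≤ i)).inf
          (fun l =>
            (lcp (revPrefix R (a' ⟨(l : ℕ) - 1, lt_of_le_of_lt (Nat.sub_le _ _) l.isLt⟩) (k - 1))
              (revPrefix R (a' l) (k - 1)) : ℕ∞))) ∧
    -- if no such previous occurrence exists
    ((∀ j : Fin m, j < i → R (a' j) k ≠ R (a' i) k) → 0 < (i' : ℕ) →
      lcp (revPrefix R (a ⟨(i' : ℕ) - 1, lt_of_le_of_lt (Nat.sub_le _ _) i'.isLt⟩) k)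
        (revPrefix R (a i') k) = 0) :=
  stmt13_general m R k hk a' a ha' ha hstable i i' hi'
end

section
/- With pBWT arrays at column k and ℓ ∈ [1, k-1]: fix a string w ∈ R[k-ℓ+1, k] and let [h, h'] be the (contiguous) set of indices i with R_{a_k[i]}[k-ℓ+1..k] = w. Then the number of distinct strings in R[k-ℓ, k] having suffix w equals 1 plus the number of indices i ∈ [h+1, h'] with d_k[i] = k-ℓ+1. -/
private theorem lex_aux' {α : Type*} [LinearOrder α] :
    ∀ (p : List α) {x y : α} (s t : List α), x < y → p ++ x :: s < p ++ y :: t := by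
  intro p x y s t hxy
  induction p with
  | nil => exact List.Lex.rel hxy
  | cons a p ih => exact List.Lex.cons ih

private theorem count_distinct' {α : Type*} [LinearOrder α] {m : ℕ} (g : Fin m → α) (h h' : Fin m)
    (hhh' : h ≤ h')
    (hmono : ∀ i j : Fin m, h ≤ i → i ≤ j → j ≤ h' → g i ≤ g j) :
    ((Finset.Icc h h').image g).card =
      1 + ((Finset.Ioc h h').filter
        (fun i => g i ≠ g ⟨(i:ℕ) - 1, lt_of_le_of_lt (Nat.sub_le _ _) i.isLt⟩)).card := by
  classical
  set p : Fin m → Fin m := fun i => ⟨(i:ℕ) - 1, lt_of_le_of_lt (Nat.sub_le _ _) i.isLt⟩ with hp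
  have hpred_lt : ∀ i : Fin m, h < i → p i < i := by
    intro i hi
    have := (Fin.lt_def).mp hi
    rw [Fin.lt_def]
    simp only [hp]
    omega
  have hpred_ge : ∀ i : Fin m, h < i → h ≤ p i := by
    intro i hi
    have := (Fin.lt_def).mp hi
    rw [Fin.le_def]
    simp only [hp]
    omega
  have hle_pred : ∀ i j : Fin m, i < j → i ≤ p j := by
    intro i j hij
    have := (Fin.lt_def).mp hij
    rw [Fin.le_def]
    simp only [hp]
    omega
  set J := (Finset.Ioc h h').filter
      (fun i => g i ≠ g ⟨(i:ℕ) - 1, lt_of_le_of_lt (Nat.sub_le _ _) i.isLt⟩) with hJdef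
  have hJ : ∀ i ∈ J, h < i ∧ i ≤ h' ∧ g i ≠ g (p i) := by
    intro i hi
    have := Finset.mem_filter.mp hi
    have h2 := Finset.mem_Ioc.mp this.1
    exact ⟨h2.1, h2.2, this.2⟩
  have hhJ : h ∉ J := by
    intro hc
    exact absurd (hJ h hc).1 (lt_irrefl h)
  have hmem_ge : ∀ i ∈ insert h J, h ≤ i := by
    intro i hi
    rcases Finset.mem_insert.mp hi with rfl | hi
    · exact le_refl _
    · exact (hJ i hi).1.le
  have key : (insert h J).card = ((Finset.Icc h h').image g).card := by
    apply Finset.card_bij (fun i _ => g i)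
    · intro i hi
      apply Finset.mem_image_of_mem
      rcases Finset.mem_insert.mp hi with rfl | hi
      · exact Finset.mem_Icc.mpr ⟨le_refl _, hhh'⟩
      · obtain ⟨h1, h2, _⟩ := hJ i hi
        exact Finset.mem_Icc.mpr ⟨h1.le, h2⟩
    · have aux : ∀ i j : Fin m, i ∈ insert h J → j ∈ insert h J → i < j → g i ≠ g j := by
        intro i j hi hj hij heq
        have hjJ : j ∈ J := by
          rcases Finset.mem_insert.mp hj with rfl | hj
          · exact absurd (lt_of_le_of_lt (hmem_ge i hi) hij) (lt_irrefl j)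
          · exact hj
        obtain ⟨hhj, hjh', hgj⟩ := hJ j hjJ
        have h1 : g i ≤ g (p j) :=
          hmono i (p j) (hmem_ge i hi) (hle_pred i j hij) (le_trans (hpred_lt j hhj).le hjh')
        have h2 : g (p j) ≤ g j := hmono (p j) j (hpred_ge j hhj) (hpred_lt j hhj).le hjh'
        have h1' : g j ≤ g (p j) := by rw [← heq]; exact h1
        exact hgj (le_antisymm h2 h1').symm
      intro i hi j hj heq
      by_contra hne
      rcases lt_or_gt_of_ne hne with hij | hij
      · exact aux i j hi hj hij heq
      · exact aux j i hj hi hij heq.symm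
    · intro b hb
      obtain ⟨i, hiIcc, rfl⟩ := Finset.mem_image.mp hb
      obtain ⟨hhi, hih'⟩ := Finset.mem_Icc.mp hiIcc
      set T := (Finset.Icc h i).filter (fun j => g j = g i) with hT
      have hTne : T.Nonempty :=
        ⟨i, Finset.mem_filter.mpr ⟨Finset.mem_Icc.mpr ⟨hhi, le_refl _⟩, rfl⟩⟩
      set j := T.min' hTne with hjdef
      have hjT := T.min'_mem hTne
      have hjfacts := Finset.mem_filter.mp hjT
      obtain ⟨hhj, hji⟩ := Finset.mem_Icc.mp hjfacts.1
      have hgji : g j = g i := hjfacts.2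
      by_cases hjh : j = h
      · exact ⟨h, Finset.mem_insert_self _ _, by rw [← hjh]; exact hgji⟩
      · have hhjlt : h < j := lt_of_le_of_ne hhj (Ne.symm hjh)
        have hne : g j ≠ g (p j) := by
          intro heq
          have hpT : p j ∈ T := Finset.mem_filter.mpr
            ⟨Finset.mem_Icc.mpr ⟨hpred_ge j hhjlt, le_trans (hpred_lt j hhjlt).le hji⟩,
             heq.symm.trans hgji⟩
          exact absurd (T.min'_le (p j) hpT) (not_le.mpr (hpred_lt j hhjlt))
        refine ⟨j, Finset.mem_insert_of_mem ?_, hgji⟩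
        exact Finset.mem_filter.mpr ⟨Finset.mem_Ioc.mpr ⟨hhjlt, le_trans hji hih'⟩, hne⟩
  rw [← key, Finset.card_insert_of_notMem hhJ]
  omega

private theorem revPrefix_decomp {α : Type*} {m : ℕ} (R : Fin m → ℕ → α) (k ℓ : ℕ)
    (hℓk : ℓ < k) (u : Fin m) (w : ℕ → α)
    (hu : ∀ x, k - ℓ + 1 ≤ x → x ≤ k → R u x = w x) :
    revPrefix R u k = ((List.range ℓ).map (fun x => w (k - x))) ++
      R u (k - ℓ) :: ((List.range (k - ℓ - 1)).map (fun x => R u (k - (ℓ + (x + 1))))) := by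
  unfold revPrefix
  have hr : List.range k = List.range ℓ ++ (List.range (k - ℓ)).map (ℓ + ·) := by
    rw [← List.range_add]; congr 1; omega
  rw [hr, List.map_append]
  congr 1
  · apply List.map_congr_left
    intro x hx
    have hx' := List.mem_range.mp hx
    exact hu _ (by omega) (by omega)
  · have h2 : k - ℓ = (k - ℓ - 1) + 1 := by omega
    rw [h2, List.range_succ_eq_map]
    simp only [List.map_cons, List.map_map]
    congr 1
    all_goals exact congrArg (R u) (by omega)

theorem stmt14 {α : Type*} [LinearOrder α] (m n : ℕ) (R : Fin m → ℕ → α)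
    (k : ℕ) (hk1 : 1 ≤ k) (hk2 : k ≤ n)
    (a : Equiv.Perm (Fin m)) (d : Fin m → ℕ)
    (ha : SortsRevPrefixes R a k) (hd : IsDArray R a k d)
    (ℓ : ℕ) (hℓ1 : 1 ≤ ℓ) (hℓ2 : ℓ ≤ k - 1)
    (h h' : Fin m)
    -- the indices whose suffix `R_{a i}[k-ℓ+1..k]` equals `w = R_{a h}[k-ℓ+1..k]`
    -- are exactly the contiguous block `[h, h']`
    (hblock : ∀ i : Fin m,
      (h ≤ i ∧ i ≤ h') ↔ (∀ x, k - ℓ + 1 ≤ x → x ≤ k → R (a i) x = R (a h) x)) :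
    -- the number of distinct strings in `R[k-ℓ, k]` having suffix `w`
    ((Finset.univ.filter (fun i : Fin m => ∀ x, k - ℓ + 1 ≤ x → x ≤ k →
        R i x = R (a h) x)).image
      (fun i : Fin m => fun x : Fin (ℓ + 1) => R i (k - ℓ + x))).card =
    1 + (Finset.univ.filter (fun i : Fin m => h < i ∧ i ≤ h' ∧ d i = k - ℓ + 1)).card := by
  have hℓk : ℓ < k := lt_of_le_of_lt hℓ2 (Nat.sub_lt hk1 one_pos)
  have hhh' : h ≤ h' := ((hblock h).mpr (fun x _ _ => rfl)).2
  set g : Fin m → α := fun i => R (a i) (k - ℓ) with hg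
  have hblk : ∀ i : Fin m, h ≤ i → i ≤ h' →
      ∀ x, k - ℓ + 1 ≤ x → x ≤ k → R (a i) x = R (a h) x :=
    fun i h1 h2 => (hblock i).mp ⟨h1, h2⟩
  set S := (Finset.univ.filter (fun i : Fin m => ∀ x, k - ℓ + 1 ≤ x → x ≤ k →
        R i x = R (a h) x)) with hS
  -- Step A: the strings in the image are determined by the character at `k - ℓ`
  have stepA : (S.image (fun i : Fin m => fun x : Fin (ℓ + 1) => R i (k - ℓ + x))).card
      = (S.image (fun i => R i (k - ℓ))).card := by
    have hinj : Set.InjOn (fun s : Fin (ℓ + 1) → α => s ⟨0, Nat.succ_pos ℓ⟩)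
        ↑(S.image (fun i : Fin m => fun x : Fin (ℓ + 1) => R i (k - ℓ + x))) := by
      intro u hu v hv huv
      obtain ⟨i, hiS, rfl⟩ := Finset.mem_image.mp (Finset.mem_coe.mp hu)
      obtain ⟨j, hjS, rfl⟩ := Finset.mem_image.mp (Finset.mem_coe.mp hv)
      have hiS' := (Finset.mem_filter.mp hiS).2
      have hjS' := (Finset.mem_filter.mp hjS).2
      funext x
      by_cases hx : (x : ℕ) = 0
      · have hx0 : x = ⟨0, Nat.succ_pos ℓ⟩ := Fin.ext hx
        rw [hx0]; exact huv
      · have hx1 : 1 ≤ (x : ℕ) := Nat.one_le_iff_ne_zero.mpr hx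
        have hx2 : (x : ℕ) ≤ ℓ := Nat.lt_succ_iff.mp x.isLt
        rw [hiS' (k - ℓ + x) (by omega) (by omega), hjS' (k - ℓ + x) (by omega) (by omega)]
    calc (S.image (fun i : Fin m => fun x : Fin (ℓ + 1) => R i (k - ℓ + x))).card
        = ((S.image (fun i : Fin m => fun x : Fin (ℓ + 1) => R i (k - ℓ + x))).image
            (fun s : Fin (ℓ + 1) → α => s ⟨0, Nat.succ_pos ℓ⟩)).card :=
          (Finset.card_image_of_injOn hinj).symm
      _ = (S.image (fun i => R i (k - ℓ))).card := by
          rw [Finset.image_image]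
          rfl
  -- Step B : `S` is the image of the block under `a`
  have stepB : S = (Finset.Icc h h').image ⇑a := by
    ext i
    simp only [hS, Finset.mem_filter, Finset.mem_univ, true_and, Finset.mem_image,
      Finset.mem_Icc]
    constructor
    · intro hi
      refine ⟨a.symm i, (hblock (a.symm i)).mpr ?_, a.apply_symm_apply i⟩
      intro x hx1 hx2
      rw [a.apply_symm_apply]
      exact hi x hx1 hx2
    · rintro ⟨j, hj, rfl⟩
      exact (hblock j).mp hj
  have stepB' : S.image (fun i => R i (k - ℓ)) = (Finset.Icc h h').image g := by
    rw [stepB, Finset.image_image]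
    rfl
  -- Step C : monotonicity of `g` on the block
  have hmono : ∀ i j : Fin m, h ≤ i → i ≤ j → j ≤ h' → g i ≤ g j := by
    intro i j h1 h2 h3
    by_contra hlt
    push_neg at hlt
    have hij := ha i j h2
    have hdi := revPrefix_decomp R k ℓ hℓk (a i) (R (a h)) (hblk i h1 (le_trans h2 h3))
    have hdj := revPrefix_decomp R k ℓ hℓk (a j) (R (a h)) (hblk j (le_trans h1 h2) h3)
    have hlt' : revPrefix R (a j) k < revPrefix R (a i) k := by
      rw [hdi, hdj]
      exact lex_aux' _ _ _ hlt
    exact absurd hij (not_le_of_gt hlt')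
  -- Step D : jumps correspond to `d i = k - ℓ + 1`
  have keyD : ∀ i : Fin m, h < i → i ≤ h' →
      (d i = k - ℓ + 1 ↔
        g i ≠ g ⟨(i:ℕ) - 1, lt_of_le_of_lt (Nat.sub_le _ _) i.isLt⟩) := by
    intro i h1 h2
    set q : Fin m := ⟨(i:ℕ) - 1, lt_of_le_of_lt (Nat.sub_le _ _) i.isLt⟩ with hq
    have hval := Fin.lt_def.mp h1
    have hi0 : (i : ℕ) ≠ 0 := by omega
    obtain ⟨hd1, hd2, hagree, hmis⟩ := (hd i).2 hi0
    have hq1 : h ≤ q := by rw [Fin.le_def]; simp only [hq]; omega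
    have hq2 : q ≤ h' := le_trans (by rw [Fin.le_def]; simp only [hq]; omega) h2
    have hbi := hblk i h1.le h2
    have hbq := hblk q hq1 hq2
    have hupper : d i ≤ k - ℓ + 1 := by
      by_contra hc
      push_neg at hc
      have h1d : 1 < d i := by omega
      apply hmis h1d
      rw [hbi (d i - 1) (by omega) (by omega), hbq (d i - 1) (by omega) (by omega)]
    constructor
    · intro hdi
      have h1d : 1 < d i := by omega
      have := hmis h1d
      have hsub : d i - 1 = k - ℓ := by omega
      rw [hsub] at this
      exact this
    · intro hne
      by_contra hc
      have hle : d i ≤ k - ℓ := by omega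
      exact hne (hagree (k - ℓ) hle (by omega))
  have stepD : (Finset.univ.filter (fun i : Fin m => h < i ∧ i ≤ h' ∧ d i = k - ℓ + 1)) =
      (Finset.Ioc h h').filter
        (fun i => g i ≠ g ⟨(i:ℕ) - 1, lt_of_le_of_lt (Nat.sub_le _ _) i.isLt⟩) := by
    ext i
    simp only [Finset.mem_filter, Finset.mem_univ, true_and, Finset.mem_Ioc]
    constructor
    · rintro ⟨h1, h2, h3⟩
      exact ⟨⟨h1, h2⟩, (keyD i h1 h2).mp h3⟩
    · rintro ⟨⟨h1, h2⟩, h3⟩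
      exact ⟨h1, h2, (keyD i h1 h2).mpr h3⟩
  rw [stepA, stepB', stepD]
  exact count_distinct' g h h' hhh' hmono
end
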